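/- arXiv:2602.17554 — 2 statements merged into one kernel-verified Lean document; each statement's English description precedes it below -/
import Mathlib

section
/- Under the disjoint-support static gating setup, the softmax weights σ_k = e^{ε_k} / ∑_j e^{ε_j} achieve the capacity lower bound exactly: D_KL(p_k ‖ π_σ) = log(∑_j e^{ε_j}) for every k, where π_σ = ∑_k σ_k π_k. -/
open Finset

/-- Kullback-Leibler divergence on a finite type, with convention 0·log 0 = 0. -/
noncomputable def KL {X : Type*} [Fintype X] (p q : X → ℝ) : ℝ :=
  ∑ x, p x * Real.log (p x / q x)

/-- `p` is a probability mass function on a finite type. -/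
def IsPMF {X : Type*} [Fintype X] (p : X → ℝ) : Prop :=
  (∀ x, 0 ≤ p x) ∧ ∑ x, p x = 1

/-! On the support of `p_k` only the `k`-th component of the mixture `π_σ` is nonzero, so there
`D(p_k ‖ π_σ) = D(p_k ‖ σ_k π_k) = ε_k - log σ_k`, and the softmax choice of `σ_k` makes this
`log ∑_j e^{ε_j}` independently of `k`. -/

theorem sum_mul_eq_single_of_disjoint {ι X : Type*} [Fintype ι] {π : ι → X → ℝ}
    (hdisj : ∀ k j, k ≠ j → ∀ x, π k x = 0 ∨ π j x = 0) (w : ι → ℝ) {k : ι} {x : X}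
    (hx : π k x ≠ 0) : ∑ j, w j * π j x = w k * π k x := by
  refine Finset.sum_eq_single k (fun j _ hjk => ?_) (fun hk => absurd (mem_univ k) hk)
  rcases hdisj k j hjk.symm x with h | h
  · exact absurd h hx
  · rw [h, mul_zero]

section KL

variable {X : Type*} [Fintype X] {p q q' : X → ℝ}

theorem KL_congr_right (h : ∀ x, p x ≠ 0 → q x = q' x) : KL p q = KL p q' := by
  refine Finset.sum_congr rfl fun x _ => ?_
  by_cases hx : p x = 0
  · simp [hx]
  · rw [h x hx]

theorem KL_const_mul_right {c : ℝ} (hc : 0 < c) (hp : ∑ x, p x = 1)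
    (hq : ∀ x, p x ≠ 0 → q x ≠ 0) : KL p (fun x => c * q x) = KL p q - Real.log c := by
  have hterm : ∀ x, p x * Real.log (p x / (c * q x))
      = p x * Real.log (p x / q x) - p x * Real.log c := by
    intro x
    by_cases hx : p x = 0
    · simp [hx]
    · rw [div_mul_eq_div_div_swap, Real.log_div (div_ne_zero hx (hq x hx)) hc.ne', mul_sub]
  simp only [KL, hterm, sum_sub_distrib, ← sum_mul, hp, one_mul]

end KL

theorem softmax_weights_achieve_capacity_general
    {X : Type*} [Fintype X] {n : ℕ}
    (p π : Fin n → X → ℝ)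
    (hp : ∀ k, IsPMF (p k))
    (hdisj : ∀ k j, k ≠ j → ∀ x, π k x = 0 ∨ π j x = 0)
    (hsupp : ∀ k x, 0 < p k x → 0 < π k x)
    (ε : Fin n → ℝ) (hε : ∀ k, ε k = KL (p k) (π k)) :
    ∀ k, KL (p k)
        (fun x => ∑ j, (Real.exp (ε j) / ∑ i, Real.exp (ε i)) * π j x)
      = Real.log (∑ j, Real.exp (ε j)) := by
  intro k
  set S := ∑ i, Real.exp (ε i)
  have hS : 0 < S := sum_pos (fun i _ => Real.exp_pos _) ⟨k, mem_univ k⟩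
  have hπ_ne : ∀ x, p k x ≠ 0 → π k x ≠ 0 := fun x hx =>
    (hsupp k x (((hp k).1 x).lt_of_ne' hx)).ne'
  have hmix : ∀ x, p k x ≠ 0 →
      ∑ j, (Real.exp (ε j) / S) * π j x = (Real.exp (ε k) / S) * π k x := fun x hx =>
    sum_mul_eq_single_of_disjoint hdisj _ (hπ_ne x hx)
  rw [KL_congr_right hmix, KL_const_mul_right (by positivity) (hp k).2 hπ_ne, ← hε k,
    Real.log_div (Real.exp_ne_zero _) hS.ne', Real.log_exp]
  ring

/-- With disjoint expert supports, the softmax weights `σ_k = e^{ε_k}/∑_j e^{ε_j}`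
achieve the capacity bound exactly: `D(p_k ‖ π_σ) = log (∑_j e^{ε_j})` for every `k`. -/
theorem softmax_weights_achieve_capacity
    {X : Type*} [Fintype X] {n : ℕ}
    (p π : Fin n → X → ℝ)
    (hp : ∀ k, IsPMF (p k)) (hπ : ∀ k, IsPMF (π k))
    (hdisj : ∀ k j, k ≠ j → ∀ x, π k x = 0 ∨ π j x = 0)
    (hsupp : ∀ k x, 0 < p k x → 0 < π k x)
    (ε : Fin n → ℝ) (hε : ∀ k, ε k = KL (p k) (π k)) :
    ∀ k, KL (p k)
        (fun x => ∑ j, (Real.exp (ε j) / ∑ i, Real.exp (ε i)) * π j x)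
      = Real.log (∑ j, Real.exp (ε j)) :=
  softmax_weights_achieve_capacity_general p π hp hdisj hsupp ε hε
end

section
/- Gated model coincides with retraining in exponential (linear) families: let Π be a convex set of probability distributions on a finite set X such that for every distribution p the reverse-information projection π*(p) = argmin_{π ∈ Π} D_KL(p ‖ π) exists, is unique, and satisfies the Pythagorean equality D_KL(p ‖ π) = D_KL(p ‖ π*(p)) + D_KL(π*(p) ‖ π) for all π ∈ Π. Then for any sources p_1,...,p_n and λ ∈ Δ^n, the projection of the mixture equals the mixture of the projections: π*(∑_k λ_k p_k) = ∑_k λ_k π*(p_k). -/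
/-!
The cross term `∑ₓ p x log π x` of `KL p π` is linear in `p`, so for a mixture `m = ∑ λₖ pₖ` the
difference `KL m π - ∑ λₖ KL pₖ π` does not depend on `π`. Applying the Pythagorean identity to
each `pₖ`, and the same observation to `q = ∑ λₖ π*(pₖ)`, shows that `KL m π - KL q π` is constant
on `Π`; evaluating at `π = q` gives `KL m π = KL m q + KL q π`. Hence `q ∈ Π` minimises `KL m ·`,
and uniqueness of the projection gives `q = π*(m)`.
-/

open Finset

section

variable {X ι : Type*} [Fintype ι]

def mixture (l : ι → ℝ) (f : ι → X → ℝ) : X → ℝ := fun x => ∑ k, l k * f k x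

lemma mixture_eq_sum_smul (l : ι → ℝ) (f : ι → X → ℝ) : mixture l f = ∑ k, l k • f k := by
  ext x
  simp [mixture, Finset.sum_apply]

variable [Fintype X]

lemma sum_mixture_mul (l : ι → ℝ) (f : ι → X → ℝ) (g : X → ℝ) :
    ∑ x, mixture l f x * g x = ∑ k, l k * ∑ x, f k x * g x := by
  simp_rw [mixture, sum_mul, mul_sum, mul_assoc]
  exact sum_comm

lemma isPMF_mixture {l : ι → ℝ} {f : ι → X → ℝ} (hl : ∀ k, 0 ≤ l k) (hl1 : ∑ k, l k = 1)
    (hf : ∀ k, IsPMF (f k)) : IsPMF (mixture l f) := by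
  refine ⟨fun x => sum_nonneg fun k _ => mul_nonneg (hl k) ((hf k).1 x), ?_⟩
  simpa [(hf _).2, hl1] using sum_mixture_mul l f 1

lemma KL_eq_sub (p : X → ℝ) {π : X → ℝ} (hπ : ∀ x, π x ≠ 0) :
    KL p π = ∑ x, p x * Real.log (p x) - ∑ x, p x * Real.log (π x) := by
  rw [KL, ← sum_sub_distrib]
  refine sum_congr rfl fun x _ => ?_
  rcases eq_or_ne (p x) 0 with h | h
  · simp [h]
  · rw [Real.log_div h (hπ x), mul_sub]

lemma KL_self {q : X → ℝ} (hq : ∀ x, q x ≠ 0) : KL q q = 0 := by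
  simp [KL_eq_sub q hq]

lemma KL_nonneg {p q : X → ℝ} (hp : ∀ x, 0 ≤ p x) (hq : ∀ x, 0 < q x)
    (hsum : ∑ x, p x = ∑ x, q x) : 0 ≤ KL p q := by
  have hpointwise : ∀ x, p x - q x ≤ p x * Real.log (p x / q x) := by
    intro x
    rcases (hp x).eq_or_lt with h | h
    · simp [← h, (hq x).le]
    · have := Real.one_sub_inv_le_log_of_pos (div_pos h (hq x))
      rw [inv_div] at this
      calc p x - q x = p x * (1 - q x / p x) := by field_simp
        _ ≤ _ := mul_le_mul_of_nonneg_left this h.le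
  calc (0 : ℝ) = ∑ x, (p x - q x) := by rw [sum_sub_distrib, hsum, sub_self]
    _ ≤ KL p q := sum_le_sum fun x _ => hpointwise x

lemma KL_mixture_sub_sum_KL_eq (l : ι → ℝ) (f : ι → X → ℝ) {π r : X → ℝ}
    (hπ : ∀ x, π x ≠ 0) (hr : ∀ x, r x ≠ 0) :
    KL (mixture l f) π - ∑ k, l k * KL (f k) π = KL (mixture l f) r - ∑ k, l k * KL (f k) r := by
  have hconst : ∀ {π : X → ℝ}, (∀ x, π x ≠ 0) →
      KL (mixture l f) π - ∑ k, l k * KL (f k) π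
        = ∑ x, mixture l f x * Real.log (mixture l f x)
          - ∑ k, l k * ∑ x, f k x * Real.log (f k x) := by
    intro π hπ
    simp_rw [KL_eq_sub _ hπ, mul_sub, sum_sub_distrib, sum_mixture_mul]
    ring
  rw [hconst hπ, hconst hr]

lemma KL_mixture_pythagorean {S : Set (X → ℝ)} (hS : ∀ π ∈ S, ∀ x, π x ≠ 0)
    (l : ι → ℝ) (p proj : ι → X → ℝ)
    (hPyth : ∀ k, ∀ π ∈ S, KL (p k) π = KL (p k) (proj k) + KL (proj k) π)
    (hq : mixture l proj ∈ S) {π : X → ℝ} (hπ : π ∈ S) :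
    KL (mixture l p) π = KL (mixture l p) (mixture l proj) + KL (mixture l proj) π := by
  have hsum_pyth : ∀ π ∈ S, ∑ k, l k * KL (p k) π
      = ∑ k, l k * KL (p k) (proj k) + ∑ k, l k * KL (proj k) π := fun π hπ => by
    simp_rw [hPyth _ π hπ, mul_add, sum_add_distrib]
  have hp := KL_mixture_sub_sum_KL_eq l p (hS π hπ) (hS _ hq)
  have hproj := KL_mixture_sub_sum_KL_eq l proj (hS π hπ) (hS _ hq)
  rw [KL_self (hS _ hq)] at hproj
  linarith [hsum_pyth π hπ, hsum_pyth _ hq]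

end

/-- Gated model coincides with retraining in linear (exponential) families:
if the reverse information projection onto a convex family `Π` exists, is unique, and
satisfies the Pythagorean identity, then the projection of a mixture equals the mixture
of the projections. -/
theorem projection_of_mixture_eq_mixture_of_projections
    {X : Type*} [Fintype X] {n : ℕ}
    (Fam : Set (X → ℝ)) (hFamConvex : Convex ℝ Fam)
    (hFam : ∀ π ∈ Fam, IsPMF π ∧ ∀ x, 0 < π x)
    (proj : (X → ℝ) → (X → ℝ))
    (hprojMem : ∀ p : X → ℝ, IsPMF p → proj p ∈ Fam)
    (hprojMin : ∀ p : X → ℝ, IsPMF p → ∀ π ∈ Fam, KL p (proj p) ≤ KL p π)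
    (hprojUnique : ∀ p : X → ℝ, IsPMF p → ∀ π ∈ Fam,
      KL p π = KL p (proj p) → π = proj p)
    (hPyth : ∀ p : X → ℝ, IsPMF p → ∀ π ∈ Fam,
      KL p π = KL p (proj p) + KL (proj p) π)
    (p : Fin n → X → ℝ) (hp : ∀ k, IsPMF (p k))
    (l : Fin n → ℝ) (hl : ∀ k, 0 ≤ l k) (hl1 : ∑ k, l k = 1) :
    proj (fun x => ∑ k, l k * p k x) = fun x => ∑ k, l k * proj (p k) x := by
  change proj (mixture l p) = mixture l (fun k => proj (p k))
  set q := mixture l (fun k => proj (p k))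
  have hm : IsPMF (mixture l p) := isPMF_mixture hl hl1 hp
  have hq : q ∈ Fam := by
    rw [show q = ∑ k, l k • proj (p k) from mixture_eq_sum_smul _ _]
    exact hFamConvex.sum_mem (fun k _ => hl k) hl1 fun k _ => hprojMem _ (hp k)
  have hpm : proj (mixture l p) ∈ Fam := hprojMem _ hm
  have hpyth_q := KL_mixture_pythagorean (fun π hπ x => ((hFam π hπ).2 x).ne') l p _
    (fun k => hPyth _ (hp k)) hq hpm
  have hq_nonneg : 0 ≤ KL q (proj (mixture l p)) :=
    KL_nonneg (hFam q hq).1.1 (hFam _ hpm).2 (by rw [(hFam q hq).1.2, (hFam _ hpm).1.2])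
  have hq_min : KL (mixture l p) q = KL (mixture l p) (proj (mixture l p)) :=
    le_antisymm (by linarith) (hprojMin _ hm q hq)
  exact (hprojUnique _ hm q hq hq_min).symm
end
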